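/- arXiv:1706.09347 — 2 statements merged into one kernel-verified Lean document; each statement's English description precedes it below -/
import Mathlib

section
/- The drive-time function T is subadditive: for all d₁, d₂ ≥ 0, T(d₁ + d₂) ≤ T(d₁) + T(d₂). (Driving a distance in one continuous motion is never slower than stopping in between.) -/
noncomputable def driveTime (a adec v d : ℝ) : ℝ :=
  if d ≥ v^2/(2*a) + v^2/(2*adec) then
    v/a + v/adec + (d - (v^2/(2*a) + v^2/(2*adec)))/v
  else
    Real.sqrt (2*d*(a+adec)/(a*adec))


theorem driveTime_subadditive (a adec v : ℝ) (ha : 0 < a) (hadec : 0 < adec) (hv : 0 < v) :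
    ∀ d₁ d₂ : ℝ, 0 ≤ d₁ → 0 ≤ d₂ →
      driveTime a adec v (d₁ + d₂) ≤ driveTime a adec v d₁ + driveTime a adec v d₂ := by
  intro d1 d2 h1 h2
  unfold driveTime
  set s : ℝ := v^2/(2*a) + v^2/(2*adec) with hs
  have hs_pos : 0 < s := by positivity
  -- chord inequality
  have key : ∀ d : ℝ, 0 ≤ d → d ≤ s → 2*d/v ≤ Real.sqrt (2*d*(a+adec)/(a*adec)) := by
    intro d hd hds
    have h0 : (0:ℝ) ≤ 2*d/v := by positivity
    rw [← Real.sqrt_sq h0]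
    apply Real.sqrt_le_sqrt
    rw [div_pow, div_le_div_iff₀ (by positivity) (by positivity)]
    have hds' : d * (2*a*adec) ≤ s * (2*a*adec) :=
      mul_le_mul_of_nonneg_right hds (by positivity)
    rw [hs] at hds'
    have : v^2/(2*a) * (2*a*adec) + v^2/(2*adec) * (2*a*adec)
        = v^2*adec + v^2*a := by field_simp
    nlinarith [sq_nonneg v, mul_pos ha hadec, mul_nonneg hd hd]
  have hK : v/a + v/adec = 2*s/v := by
    rw [hs]; field_simp
  by_cases hc1 : d1 ≥ s <;> by_cases hc2 : d2 ≥ s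
  · -- both large
    have h12 : d1 + d2 ≥ s := by linarith
    rw [if_pos h12, if_pos hc1, if_pos hc2]
    have : (d1 + d2 - s)/v = (d1 - s)/v + (d2 - s)/v + s/v := by ring
    rw [this]
    have hsv : s/v ≤ v/a + v/adec := by
      rw [hK]
      have h0 : 0 ≤ s/v := by positivity
      have he : 2*s/v = s/v + s/v := by ring
      linarith
    linarith
  · -- d1 large, d2 small
    have h12 : d1 + d2 ≥ s := by linarith
    rw [if_pos h12, if_pos hc1, if_neg hc2]
    have hsq := key d2 h2 (le_of_not_ge hc2)
    have he : (d1 + d2 - s)/v = (d1 - s)/v + 2*d2/v - d2/v := by ring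
    have hd2v : 0 ≤ d2/v := by positivity
    linarith [he ▸ le_refl ((d1 + d2 - s)/v)]
  · -- d1 small, d2 large
    have h12 : d1 + d2 ≥ s := by linarith
    rw [if_pos h12, if_neg hc1, if_pos hc2]
    have hsq := key d1 h1 (le_of_not_ge hc1)
    have hd1v : 0 ≤ d1/v := by positivity
    have he : (d1 + d2 - s)/v = (d2 - s)/v + 2*d1/v - d1/v := by ring
    linarith [he ▸ le_refl ((d1 + d2 - s)/v)]
  · by_cases h12 : d1 + d2 ≥ s
    · -- sum large, both small
      rw [if_pos h12, if_neg hc1, if_neg hc2]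
      have k1 := key d1 h1 (le_of_not_ge hc1)
      have k2 := key d2 h2 (le_of_not_ge hc2)
      have he : v/a + v/adec + (d1 + d2 - s)/v = 2*d1/v + 2*d2/v + (s - (d1+d2))/v := by
        rw [hK]; ring
      have hneg : (s - (d1+d2))/v ≤ 0 := by
        apply div_nonpos_of_nonpos_of_nonneg (by linarith) hv.le
      linarith
    · -- all small: sqrt subadditivity
      rw [if_neg h12, if_neg hc1, if_neg hc2]
      set c : ℝ := (a+adec)/(a*adec) with hc
      have hc0 : 0 < c := by positivity
      have e1 : 2*d1*(a+adec)/(a*adec) = 2*d1*c := by rw [hc]; ring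
      have e2 : 2*d2*(a+adec)/(a*adec) = 2*d2*c := by rw [hc]; ring
      have e3 : 2*(d1+d2)*(a+adec)/(a*adec) = 2*d1*c + 2*d2*c := by rw [hc]; ring
      rw [e1, e2, e3]
      have hx : (0:ℝ) ≤ 2*d1*c := by positivity
      have hy : (0:ℝ) ≤ 2*d2*c := by positivity
      have s1 := Real.sq_sqrt hx
      have s2 := Real.sq_sqrt hy
      have s3 := Real.sq_sqrt (add_nonneg hx hy)
      have n1 := Real.sqrt_nonneg (2*d1*c)
      have n2 := Real.sqrt_nonneg (2*d2*c)
      have n3 := Real.sqrt_nonneg (2*d1*c + 2*d2*c)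
      nlinarith [mul_nonneg n1 n2]
end

section
/- The cost of a move action computed by a backward search to the last rotation node is nonnegative and bounded below by the top-speed travel time of the final segment: for 0 ≤ d₁ ≤ d₂, T(d₂) − T(d₁) ≥ (d₂ − d₁)/v, where T is the drive-time function with top speed v. -/
lemma sqrt_seg_bound (k v x y : ℝ) (hk : 0 < k) (hv : 0 < v)
    (hx : 0 ≤ x) (hxy : x ≤ y) (hy : y ≤ k * v^2 / 4) :
    Real.sqrt (k * y) - Real.sqrt (k * x) ≥ (y - x) / v := by
  set sx := Real.sqrt (k * x) with hsxdef
  set sy := Real.sqrt (k * y) with hsydef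
  have hy0 : 0 ≤ y := hx.trans hxy
  have hsx2 : sx ^ 2 = k * x := Real.sq_sqrt (by positivity)
  have hsy2 : sy ^ 2 = k * y := Real.sq_sqrt (by positivity)
  have hsx0 : 0 ≤ sx := Real.sqrt_nonneg _
  have hsxy : sx ≤ sy := Real.sqrt_le_sqrt (by nlinarith)
  have hsyb : sy ≤ k * v / 2 := by
    have : k * y ≤ (k * v / 2) ^ 2 := by nlinarith
    calc sy ≤ Real.sqrt ((k * v / 2) ^ 2) := Real.sqrt_le_sqrt this
      _ = k * v / 2 := Real.sqrt_sq (by positivity)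
  rw [ge_iff_le, div_le_iff₀ hv]
  nlinarith [mul_nonneg (sub_nonneg.2 hsxy) (sub_nonneg.2 (by nlinarith : sy + sx ≤ k * v))]

theorem driveTime_segment_lower_bound (a adec v : ℝ) (ha : 0 < a) (hadec : 0 < adec) (hv : 0 < v) :
    ∀ d₁ d₂ : ℝ, 0 ≤ d₁ → d₁ ≤ d₂ →
      driveTime a adec v d₂ - driveTime a adec v d₁ ≥ (d₂ - d₁) / v := by
  intro d₁ d₂ h1 h12
  set k : ℝ := 2 * (a + adec) / (a * adec) with hkdef
  have ha' : a ≠ 0 := ha.ne'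
  have hadec' : adec ≠ 0 := hadec.ne'
  have hv' : v ≠ 0 := hv.ne'
  have hk : 0 < k := by positivity
  set D : ℝ := v^2/(2*a) + v^2/(2*adec) with hDdef
  have hDk : D = k * v ^ 2 / 4 := by
    rw [hDdef, hkdef, div_mul_eq_mul_div, div_div, div_add_div _ _ (by positivity : (2*a:ℝ) ≠ 0) (by positivity : (2*adec:ℝ) ≠ 0), div_eq_div_iff (by positivity) (by positivity)]
    ring
  have harg : ∀ d : ℝ, 2*d*(a+adec)/(a*adec) = k * d := by
    intro d; rw [hkdef, div_mul_eq_mul_div]; ring_nf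
  have hsum : v/a + v/adec = Real.sqrt (k * D) := by
    have : k * D = (k * v / 2) ^ 2 := by rw [hDk]; ring
    rw [this, Real.sqrt_sq (by positivity), hkdef]
    field_simp; ring
  unfold driveTime
  by_cases h2D : d₂ ≥ D
  · by_cases h1D : d₁ ≥ D
    · rw [if_pos h2D, if_pos h1D]
      have : (v/a + v/adec + (d₂ - D)/v) - (v/a + v/adec + (d₁ - D)/v) = (d₂ - d₁)/v := by
        ring
      rw [this]
    · rw [if_pos h2D, if_neg h1D, harg]
      push_neg at h1D
      have key := sqrt_seg_bound k v d₁ D hk hv h1 h1D.le (le_of_eq hDk)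
      rw [← hsum] at key
      have h2 : (d₂ - D) / v + (D - d₁) / v = (d₂ - d₁) / v := by ring
      linarith [key, h2]
  · push_neg at h2D
    have h1D : ¬ d₁ ≥ D := by push_neg; linarith
    rw [if_neg (by push_neg; exact h2D), if_neg h1D, harg, harg]
    exact sqrt_seg_bound k v d₁ d₂ hk hv h1 h12 (by rw [← hDk]; exact h2D.le)
end
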